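/- (Abstract form of Lemma 3.1 of the paper.) Assume $B + E = A$ and that $B \cap E$ is finite. If $q$ is a prime number that divides the order of some finite-order element of the quotient group $A^G/(B^G + E^G)$, then $q$ divides the cardinality $|B \cap E|$. -/

import Mathlib

/-- The subgroup of `G`-fixed points of an abelian group `A` with `G` acting by
additive automorphisms. -/
def fixedPts (G A : Type*) [Group G] [AddCommGroup A] [DistribMulAction G A] :
    AddSubgroup A where
  carrier := {a | ∀ g : G, g • a = a}
  zero_mem' := fun g => smul_zero g
  add_mem' := fun ha hb g => by rw [smul_add, ha g, hb g]
  neg_mem' := fun ha g => by rw [smul_neg, ha g]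

/-!
Write a fixed point `a = b + e` with `b ∈ B`, `e ∈ E`. For every `g`, the defect
`g • b - b = e - g • e` lies in `B ∩ E`, so multiplying by `n = |B ∩ E|` kills it: `n • b` and
`n • e` are fixed, and `n • a ∈ Bᴳ + Eᴳ`. Hence `n` annihilates `Aᴳ/(Bᴳ + Eᴳ)`, and the order of
every element divides `n`.
-/

theorem AddSubgroup.card_nsmul_eq_zero_of_mem {A : Type*} [AddGroup A] (H : AddSubgroup A)
    {c : A} (hc : c ∈ H) : Nat.card H • c = 0 :=
  congrArg Subtype.val (card_nsmul_eq_zero' (x := (⟨c, hc⟩ : H)))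

section FixedPoints

variable {G A : Type*} [Group G] [AddCommGroup A] [DistribMulAction G A]

theorem smul_sub_self_mem_inf {B E : AddSubgroup A}
    (hB : ∀ (g : G), ∀ x ∈ B, g • x ∈ B) (hE : ∀ (g : G), ∀ x ∈ E, g • x ∈ E)
    {b e : A} (hb : b ∈ B) (he : e ∈ E) (hfix : b + e ∈ fixedPts G A) (g : G) :
    g • b - b ∈ B ⊓ E := by
  have hdefect : g • b - b = e - g • e := by
    have := hfix g
    rw [smul_add] at this
    linear_combination (norm := abel) this
  exact ⟨B.sub_mem (hB g b hb) hb, hdefect ▸ E.sub_mem he (hE g e he)⟩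

theorem card_nsmul_mem_fixedPts {H : AddSubgroup A} {b : A}
    (hb : ∀ g : G, g • b - b ∈ H) : Nat.card H • b ∈ fixedPts G A := fun g => by
  rw [← sub_eq_zero, smul_comm, ← nsmul_sub, H.card_nsmul_eq_zero_of_mem (hb g)]

theorem card_inf_nsmul_mem_sup_addSubgroupOf {B E : AddSubgroup A}
    (hB : ∀ (g : G), ∀ x ∈ B, g • x ∈ B) (hE : ∀ (g : G), ∀ x ∈ E, g • x ∈ E)
    (hBE : B ⊔ E = ⊤) (a : fixedPts G A) :
    Nat.card ↥(B ⊓ E) • a ∈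
      B.addSubgroupOf (fixedPts G A) ⊔ E.addSubgroupOf (fixedPts G A) := by
  obtain ⟨b, hb, e, he, hbe⟩ := AddSubgroup.mem_sup.mp (hBE ▸ AddSubgroup.mem_top (a : A))
  have hfix : b + e ∈ fixedPts G A := hbe ▸ a.2
  have hnb := card_nsmul_mem_fixedPts (smul_sub_self_mem_inf hB hE hb he hfix)
  have hne := card_nsmul_mem_fixedPts
    (smul_sub_self_mem_inf hE hB he hb (add_comm b e ▸ hfix))
  rw [inf_comm] at hne
  have hsplit : Nat.card ↥(B ⊓ E) • a = ⟨_, hnb⟩ + ⟨_, hne⟩ := by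
    ext
    simp [← hbe, smul_add]
  rw [hsplit]
  exact add_mem
    (AddSubgroup.mem_sup_left (AddSubgroup.mem_addSubgroupOf.mpr (B.nsmul_mem hb _)))
    (AddSubgroup.mem_sup_right (AddSubgroup.mem_addSubgroupOf.mpr (E.nsmul_mem he _)))

end FixedPoints

theorem stmt2_general {G A : Type*} [Group G] [AddCommGroup A] [DistribMulAction G A]
    (B E : AddSubgroup A)
    (hB : ∀ (g : G), ∀ x ∈ B, g • x ∈ B)
    (hE : ∀ (g : G), ∀ x ∈ E, g • x ∈ E)
    (hBE : B ⊔ E = ⊤)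
    (q : ℕ)
    (x : ↥(fixedPts G A) ⧸
      (B.addSubgroupOf (fixedPts G A) ⊔ E.addSubgroupOf (fixedPts G A)))
    (hqx : q ∣ addOrderOf x) :
    q ∣ Nat.card ↥(B ⊓ E) := by
  have hkill : Nat.card ↥(B ⊓ E) • x = 0 := by
    induction x using QuotientAddGroup.induction_on with
    | H a =>
      rw [← QuotientAddGroup.mk_nsmul, QuotientAddGroup.eq_zero_iff]
      exact card_inf_nsmul_mem_sup_addSubgroupOf hB hE hBE a
  exact hqx.trans (addOrderOf_dvd_of_nsmul_eq_zero hkill)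

/-- abstract form of Lemma 3.1 of the paper.  Let `G` act on an
abelian group `A` by additive automorphisms, let `B`, `E` be `G`-stable subgroups with
`B + E = A` and `B ∩ E` finite.  If a prime `q` divides the order of some finite-order
element of `Aᴳ/(Bᴳ + Eᴳ)`, then `q` divides `|B ∩ E|`. -/
theorem stmt2 {G A : Type*} [Group G] [AddCommGroup A] [DistribMulAction G A]
    (B E : AddSubgroup A)
    (hB : ∀ (g : G), ∀ x ∈ B, g • x ∈ B)
    (hE : ∀ (g : G), ∀ x ∈ E, g • x ∈ E)
    (hBE : B ⊔ E = ⊤)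
    (hfin : Finite ↥(B ⊓ E))
    (q : ℕ) (hq : q.Prime)
    (x : ↥(fixedPts G A) ⧸
      (B.addSubgroupOf (fixedPts G A) ⊔ E.addSubgroupOf (fixedPts G A)))
    (hx : IsOfFinAddOrder x) (hqx : q ∣ addOrderOf x) :
    q ∣ Nat.card ↥(B ⊓ E) :=
  stmt2_general B E hB hE hBE q x hqx
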